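/- arXiv:quant-ph/0602098 — 6 statements merged into one kernel-verified Lean document; each statement's English description precedes it below -/
import Mathlib

section
/- Let γ, N be real with N ≥ 1 and γ^2 < 2N + 3. Define V(x) = -γ/4 + ((γ^2 - 3 - 2N)/16) x^2 + (γ/32) x^4 + (1/256) x^6. Then V has exactly two global minimizers at x = ±x0, where x0^2 = (4/3)√(4γ^2 - 3(γ^2 - 3 - 2N)) - 8γ/3 > 0. -/
/-!
Write `s = √(γ² + 9 + 6N)`. In the variable `t = x²` the potential is a cubic with positive
leading coefficient whose derivative vanishes at `t₀ = x0² = (4s - 8γ)/3`, so `V x - V x0` has a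
double factor `(x² - x0²)²`. The remaining linear factor `x² + 8(γ + s)/3` is positive because
`|γ| < s`, hence `V x ≥ V x0` with equality exactly when `x² = x0²`.
-/

open Real

noncomputable def sexticPotential (γ N x : ℝ) : ℝ :=
  -γ/4 + ((γ^2 - 3 - 2*N)/16)*x^2 + (γ/32)*x^4 + (1/256)*x^6

section MinimizersOfDoubleFactor

variable {f g : ℝ → ℝ} {x0 : ℝ}

lemma le_of_sub_eq_sq_sub_sq_sq_mul (hfg : ∀ x, f x - f x0 = (x^2 - x0^2)^2 * g x)
    (hg : ∀ x, 0 < g x) (x : ℝ) : f x0 ≤ f x := by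
  have := hfg x
  nlinarith [mul_nonneg (sq_nonneg (x^2 - x0^2)) (hg x).le]

lemma eq_or_eq_neg_of_sub_eq_sq_sub_sq_sq_mul (hfg : ∀ x, f x - f x0 = (x^2 - x0^2)^2 * g x)
    (hg : ∀ x, 0 < g x) {x : ℝ} (hx : f x ≤ f x0) : x = x0 ∨ x = -x0 := by
  have hzero : (x^2 - x0^2)^2 * g x = 0 :=
    (hfg x) ▸ sub_eq_zero.mpr (hx.antisymm (le_of_sub_eq_sq_sub_sq_sq_mul hfg hg x))
  have hsq : x^2 = x0^2 := by
    simpa [sub_eq_zero, (hg x).ne'] using hzero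
  exact sq_eq_sq_iff_eq_or_eq_neg.mp hsq

end MinimizersOfDoubleFactor

section SexticPotential

variable {γ N s : ℝ}

lemma sq_sqrt_discriminant (hγ2 : γ^2 < 2*N + 3) :
    √(γ^2 + 9 + 6*N) ^ 2 = γ^2 + 9 + 6*N :=
  sq_sqrt (by nlinarith [sq_nonneg γ])

lemma neg_lt_of_sq_eq_discriminant (hγ2 : γ^2 < 2*N + 3) (hs0 : 0 ≤ s)
    (hs : s^2 = γ^2 + 9 + 6*N) : -γ < s := by
  nlinarith [sq_nonneg γ]

lemma two_mul_lt_of_sq_eq_discriminant (hγ2 : γ^2 < 2*N + 3) (hs0 : 0 ≤ s)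
    (hs : s^2 = γ^2 + 9 + 6*N) : 2*γ < s := by
  nlinarith

lemma sexticPotential_sub_eq (hs : s^2 = γ^2 + 9 + 6*N) {x0 : ℝ}
    (hx0 : x0^2 = (4/3)*s - 8*γ/3) (x : ℝ) :
    sexticPotential γ N x - sexticPotential γ N x0
      = (x^2 - x0^2)^2 * ((x^2 + (8/3)*(γ + s)) / 256) := by
  unfold sexticPotential
  linear_combination (-(x0^2)^2/256 - γ*x0^2/32 - x^2*x0^2/256 - s*x0^2/64 + γ^2/48
      + 3/16 + N/8 + x^4/128 + x^2*γ/32 + x^2*s/64 - s^2/48) * hx0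
    + (x^2/48 - s/36 + γ/18) * hs

end SexticPotential

theorem sextic_double_well_minimizers_general (γ N : ℝ) (hγ2 : γ^2 < 2*N + 3)
    (V : ℝ → ℝ)
    (hV : ∀ x, V x = -γ/4 + ((γ^2 - 3 - 2*N)/16)*x^2 + (γ/32)*x^4 + (1/256)*x^6)
    (x0 : ℝ)
    (hx0sq : x0^2 = (4/3)*Real.sqrt (γ^2 + 9 + 6*N) - 8*γ/3) :
    (0 < (4/3)*Real.sqrt (γ^2 + 9 + 6*N) - 8*γ/3) ∧
    (∀ x : ℝ, V x0 ≤ V x) ∧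
    (∀ x : ℝ, (∀ y : ℝ, V x ≤ V y) → x = x0 ∨ x = -x0) := by
  obtain rfl : V = sexticPotential γ N := funext hV
  have hs0 := sqrt_nonneg (γ^2 + 9 + 6*N)
  have hs := sq_sqrt_discriminant hγ2
  have hfactor := sexticPotential_sub_eq hs hx0sq
  have hpos x : 0 < (x^2 + (8/3)*(γ + √(γ^2 + 9 + 6*N))) / 256 := by
    nlinarith [sq_nonneg x, neg_lt_of_sq_eq_discriminant hγ2 hs0 hs]
  refine ⟨by linarith [two_mul_lt_of_sq_eq_discriminant hγ2 hs0 hs],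
    le_of_sub_eq_sq_sub_sq_sq_mul hfactor hpos, fun x hx => ?_⟩
  exact eq_or_eq_neg_of_sub_eq_sq_sub_sq_sq_mul hfactor hpos (hx x0)

theorem sextic_double_well_minimizers (γ N : ℝ) (hN : 1 ≤ N) (hγ2 : γ^2 < 2*N + 3)
    (V : ℝ → ℝ)
    (hV : ∀ x, V x = -γ/4 + ((γ^2 - 3 - 2*N)/16)*x^2 + (γ/32)*x^4 + (1/256)*x^6)
    (x0 : ℝ) (hx0pos : 0 < x0)
    (hx0sq : x0^2 = (4/3)*Real.sqrt (γ^2 + 9 + 6*N) - 8*γ/3) :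
    (0 < (4/3)*Real.sqrt (γ^2 + 9 + 6*N) - 8*γ/3) ∧
    (∀ x : ℝ, V x0 ≤ V x) ∧
    (∀ x : ℝ, (∀ y : ℝ, V x ≤ V y) → x = x0 ∨ x = -x0) :=
  sextic_double_well_minimizers_general γ N hγ2 V hV x0 hx0sq
end

section
/- Let H be the differential operator H = -(k u²/2) d²/du² + (1/2)(k(N-1)u - ℰ(1 - u²)) d/du - kN²/8 - ℰNu/2 acting on polynomials, and let Q(u) = ∏_{j=1}^{N}(u - v_j) be a monic polynomial of degree N with distinct nonzero roots v_j. If HQ = EQ, then the roots satisfy the Bethe ansatz equations (ℰ(1 - v_k²) + k(1 - N)v_k)/(k v_k²) = Σ_{j≠k} 2/(v_j - v_k) for each k, and E = -kN²/8 + (ℰ/2) Σ_{j=1}^N v_j. -/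
open Polynomial Finset in
lemma bose_hubbard_deriv_prod_fin {ι : Type*} [DecidableEq ι] (s : Finset ι)
    (f : ι → Polynomial ℂ) :
    derivative (∏ j ∈ s, f j) = ∑ j ∈ s, (∏ l ∈ s.erase j, f l) * derivative (f j) := by
  classical
  induction s using Finset.induction_on with
  | empty => simp
  | @insert a s ha ih =>
    rw [Finset.prod_insert ha, derivative_mul, ih, Finset.sum_insert ha,
      Finset.erase_insert ha, Finset.mul_sum]
    have hc : ∀ j ∈ s, f a * ((∏ l ∈ s.erase j, f l) * derivative (f j))
        = (∏ l ∈ (insert a s).erase j, f l) * derivative (f j) := by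
      intro j hj
      rw [Finset.erase_insert_of_ne (by rintro rfl; exact ha hj),
        Finset.prod_insert (by simp [ha])]
      ring
    rw [Finset.sum_congr rfl hc]
    ring

open Polynomial in
theorem bose_hubbard_bethe_equations (k ℰ : ℂ) (hk : k ≠ 0) (hℰ : ℰ ≠ 0)
    (N : ℕ) (hN : 0 < N) (v : Fin N → ℂ)
    (hdist : Function.Injective v) (hnz : ∀ j, v j ≠ 0)
    (Q : Polynomial ℂ) (hQ : Q = ∏ j : Fin N, (X - C (v j)))
    (E : ℂ)
    (hHQ : C (-(k/2)) * X^2 * derivative (derivative Q)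
         + C ((1:ℂ)/2) * (C (k*((N : ℂ) - 1)) * X - C ℰ * (1 - X^2)) * derivative Q
         + (C (-(k*(N : ℂ)^2/8)) - C (ℰ*(N : ℂ)/2) * X) * Q = C E * Q) :
    (∀ i : Fin N,
      (ℰ*(1 - v i^2) + k*(1 - (N : ℂ))*v i)/(k * v i^2)
        = ∑ j ∈ Finset.univ.erase i, 2/(v j - v i)) ∧
    E = -k*(N : ℂ)^2/8 + (ℰ/2) * ∑ j : Fin N, v j := by
  classical
  constructor
  · intro i
    set Qi : Polynomial ℂ := ∏ j ∈ Finset.univ.erase i, (X - C (v j)) with hQi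
    have hfact : Q = (X - C (v i)) * Qi := by
      rw [hQ]
      exact (Finset.mul_prod_erase Finset.univ (fun j => X - C (v j))
        (Finset.mem_univ i)).symm
    have hQ' : derivative Q = Qi + (X - C (v i)) * derivative Qi := by
      rw [hfact]; simp [derivative_mul]
    have hQ'' : derivative (derivative Q)
        = 2 * derivative Qi + (X - C (v i)) * derivative (derivative Qi) := by
      rw [hQ', derivative_add, derivative_mul]; simp; ring
    set P : ℂ := ∏ j ∈ Finset.univ.erase i, (v i - v j) with hP
    have hPne : P ≠ 0 := by
      rw [hP]
      exact Finset.prod_ne_zero_iff.2 fun j hj => sub_ne_zero.2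
        fun h => (Finset.mem_erase.1 hj).1 (hdist h.symm)
    have hQiv : Qi.eval (v i) = P := by rw [hQi, hP, eval_prod]; simp
    have hQv : Q.eval (v i) = 0 := by simp [hfact]
    set S : ℂ := ∑ j ∈ Finset.univ.erase i,
        ∏ l ∈ (Finset.univ.erase i).erase j, (v i - v l) with hS
    have hQi'v : (derivative Qi).eval (v i) = S := by
      rw [hQi, bose_hubbard_deriv_prod_fin, hS]
      simp [eval_finset_sum, eval_prod]
    rw [hQ'', hQ'] at hHQ
    have heval := congrArg (eval (v i)) hHQ
    simp only [eval_add, eval_mul, eval_sub, eval_C, eval_X, eval_pow, eval_one,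
      hQv, hQiv, hQi'v, eval_ofNat, sub_self, mul_zero, zero_mul, add_zero] at heval
    have hterm : ∀ j ∈ Finset.univ.erase i,
        (v i - v j) * ∏ l ∈ (Finset.univ.erase i).erase j, (v i - v l) = P :=
      fun j hj => by
        rw [hP]
        exact Finset.mul_prod_erase (Finset.univ.erase i) (fun l => v i - v l) hj
    have hsum : ∑ j ∈ Finset.univ.erase i, 2/(v j - v i)
        = ∑ j ∈ Finset.univ.erase i,
            (-2) * (∏ l ∈ (Finset.univ.erase i).erase j, (v i - v l)) / P := by
      refine Finset.sum_congr rfl fun j hj => ?_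
      have hij : v j - v i ≠ 0 := sub_ne_zero.2 fun h => (Finset.mem_erase.1 hj).1 (hdist h)
      field_simp
      linear_combination (-1 : ℂ) * hterm j hj
    rw [hsum]
    rw [← Finset.sum_div, ← Finset.mul_sum, ← hS]
    have hvi := hnz i
    rw [div_eq_div_iff (mul_ne_zero hk (pow_ne_zero 2 hvi)) hPne]
    linear_combination (-2:ℂ) * heval
  · have hmonic : Q.Monic := by
      rw [hQ]; exact monic_prod_of_monic _ _ fun j _ => monic_X_sub_C _
    have hdeg : Q.natDegree = N := by
      rw [hQ, natDegree_prod_of_monic _ _ fun j _ => monic_X_sub_C _]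
      simp
    have hcN : Q.coeff N = 1 := by rw [← hdeg]; exact hmonic.coeff_natDegree
    have hcN1 : Q.coeff (N - 1) = -∑ j : Fin N, v j := by
      rw [hQ]
      have := prod_X_sub_C_coeff_card_pred (Finset.univ : Finset (Fin N)) v (by simpa using hN)
      simpa using this
    have hc0 : ∀ d, N < d → Q.coeff d = 0 := fun d hd =>
      coeff_eq_zero_of_natDegree_lt (hdeg ▸ hd)
    have hHQ2 : C (-(k/2)) * (derivative (derivative Q) * X^2)
        + (C ((1:ℂ)/2) * C (k*((N : ℂ) - 1)) * (derivative Q * X)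
           - C ((1:ℂ)/2) * C ℰ * derivative Q
           + C ((1:ℂ)/2) * C ℰ * (derivative Q * X^2))
        + (C (-(k*(N : ℂ)^2/8)) * Q - C (ℰ*(N : ℂ)/2) * (Q * X)) = C E * Q := by
      rw [← hHQ]; ring
    by_cases hN1 : N = 1
    · subst hN1
      have h := congrArg (fun p : Polynomial ℂ => p.coeff 1) hHQ2
      simp only [coeff_add, coeff_sub, coeff_C_mul, coeff_mul_X_pow', coeff_mul_X,
        coeff_derivative, ← C_mul] at h
      norm_num at h
      rw [hc0 2 (by omega), hcN] at h
      have hb : Q.coeff 0 = -∑ j : Fin 1, v j := hcN1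
      rw [hb] at h
      push_cast
      linear_combination -h
    · obtain ⟨m, rfl⟩ : ∃ m, N = m + 2 := ⟨N - 2, by omega⟩
      have h := congrArg (fun p : Polynomial ℂ => p.coeff (m + 2)) hHQ2
      simp only [coeff_add, coeff_sub, coeff_C_mul, coeff_mul_X_pow', coeff_mul_X,
        coeff_derivative, ← C_mul] at h
      norm_num at h
      rw [show m+1+1 = m+2 from rfl, show m+2+1 = m+3 from rfl] at h
      rw [hcN, hc0 (m+3) (by omega)] at h
      have hb : Q.coeff (m+1) = -∑ j : Fin (m+2), v j := hcN1
      rw [hb] at h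
      push_cast at h ⊢
      linear_combination -h
end

section
/- Conversely, if complex numbers v_1, ..., v_N are pairwise distinct, nonzero, and satisfy the Bethe ansatz equations (ℰ(1 - v_k²) + k(1 - N)v_k)/(k v_k²) = Σ_{j≠k} 2/(v_j - v_k) for all k, then Q(u) = ∏_{j=1}^N (u - v_j) satisfies HQ = EQ with E = -kN²/8 + (ℰ/2) Σ_j v_j, where H is the operator of the previous statement. -/
open Polynomial Finset

lemma aux_deriv_eval {ι : Type*} [DecidableEq ι] (a : ℂ) (v : ι → ℂ) (s : Finset ι)
    (h : ∀ j ∈ s, a - v j ≠ 0) :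
    eval a (derivative (∏ j ∈ s, (X - C (v j)))) =
      (∏ j ∈ s, (a - v j)) * ∑ j ∈ s, (a - v j)⁻¹ := by
  induction s using Finset.induction with
  | empty => simp
  | @insert i s hjs ih =>
    rw [Finset.prod_insert hjs, derivative_mul, Finset.prod_insert hjs, Finset.sum_insert hjs]
    have h1 : a - v i ≠ 0 := h i (Finset.mem_insert_self i s)
    have ih' := ih (fun j hjs => h j (Finset.mem_insert_of_mem hjs))
    simp only [eval_add, eval_mul, derivative_sub, derivative_X, derivative_C, sub_zero,
      eval_one, eval_sub, eval_X, eval_C, eval_prod, ih']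
    field_simp

open Polynomial in
theorem bose_hubbard_bethe_equations_converse (k ℰ : ℂ) (hk : k ≠ 0)
    (N : ℕ) (hN : 0 < N) (v : Fin N → ℂ)
    (hdist : Function.Injective v) (hnz : ∀ j, v j ≠ 0)
    (hbethe : ∀ i : Fin N,
      (ℰ*(1 - v i^2) + k*(1 - (N : ℂ))*v i)/(k * v i^2)
        = ∑ j ∈ Finset.univ.erase i, 2/(v j - v i))
    (Q : Polynomial ℂ) (hQ : Q = ∏ j : Fin N, (X - C (v j)))
    (E : ℂ) (hE : E = -k*(N : ℂ)^2/8 + (ℰ/2) * ∑ j : Fin N, v j) :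
    C (-(k/2)) * X^2 * derivative (derivative Q)
      + C ((1:ℂ)/2) * (C (k*((N : ℂ) - 1)) * X - C ℰ * (1 - X^2)) * derivative Q
      + (C (-(k*(N : ℂ)^2/8)) - C (ℰ*(N : ℂ)/2) * X) * Q = C E * Q := by
  classical
  subst hQ
  set Q : ℂ[X] := ∏ j : Fin N, (X - C (v j)) with hQ
  have hmono : Q.Monic := monic_prod_of_monic _ _ fun j _ => monic_X_sub_C _
  have hdeg : Q.natDegree = N := by
    rw [hQ, natDegree_prod_of_monic _ _ fun j _ => monic_X_sub_C _]
    simp [natDegree_X_sub_C]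
  set P : ℂ[X] := C (-(k/2)) * X^2 * derivative (derivative Q)
      + C ((1:ℂ)/2) * (C (k*((N : ℂ) - 1)) * X - C ℰ * (1 - X^2)) * derivative Q
      + (C (-(k*(N : ℂ)^2/8)) - C (ℰ*(N : ℂ)/2) * X) * Q - C E * Q with hP
  -- evaluation at the roots
  have heval : ∀ i, P.eval (v i) = 0 := by
    intro i
    have hji : ∀ j ∈ Finset.univ.erase i, v i - v j ≠ 0 := by
      intro j hj
      rw [Finset.mem_erase] at hj
      exact sub_ne_zero.mpr fun h => hj.1 (hdist h.symm)
    have hQfac : Q = (X - C (v i)) * ∏ j ∈ Finset.univ.erase i, (X - C (v j)) := by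
      rw [hQ, ← Finset.mul_prod_erase Finset.univ _ (Finset.mem_univ i)]
    have hRi := aux_deriv_eval (v i) v (Finset.univ.erase i) hji
    have hw : v i ≠ 0 := hnz i
    have hw2 : k * (v i)^2 ≠ 0 := mul_ne_zero hk (pow_ne_zero _ hw)
    have hb := hbethe i
    have hsum : (∑ j ∈ Finset.univ.erase i, 2/(v j - v i))
        = -2 * ∑ j ∈ Finset.univ.erase i, (v i - v j)⁻¹ := by
      rw [Finset.mul_sum]
      refine Finset.sum_congr rfl fun j hj => ?_
      rw [show v j - v i = -(v i - v j) by ring, div_neg, div_eq_mul_inv]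
      ring
    rw [hsum, div_eq_iff hw2] at hb
    rw [hP, hQfac]
    simp only [derivative_mul, derivative_sub, derivative_X, derivative_C, sub_zero,
      derivative_one, derivative_add, eval_add, eval_sub, eval_mul, eval_pow, eval_C,
      eval_X, eval_one, eval_prod, hRi, zero_mul, one_mul, mul_one, sub_self, mul_zero,
      zero_add, add_zero]
    linear_combination (-(∏ j ∈ Finset.univ.erase i, (v i - v j))/2) * hb
  -- coefficient facts
  have hcN : Q.coeff N = 1 := by
    have := hmono.coeff_natDegree
    rwa [hdeg] at this
  have hctop : ∀ m, N < m → Q.coeff m = 0 := fun m hm =>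
    coeff_eq_zero_of_natDegree_lt (hdeg ▸ hm)
  have hcpred : Q.coeff (N - 1) = -∑ j : Fin N, v j := by
    have h1 := prod_X_sub_C_nextCoeff (s := (Finset.univ : Finset (Fin N))) v
    rw [nextCoeff_of_natDegree_pos (by rw [hdeg]; exact hN)] at h1
    rw [hdeg] at h1
    exact h1
  have hre : P = C (-(k/2)) * (derivative (derivative Q) * X^2)
      + C (k*((N:ℂ)-1)) * (C ((1:ℂ)/2) * (derivative Q * X^1))
      + C ℰ * (C ((1:ℂ)/2) * (derivative Q * X^2))
      - C ℰ * (C ((1:ℂ)/2) * derivative Q)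
      + C (-(k*(N:ℂ)^2/8)) * Q - C (ℰ*(N:ℂ)/2) * (Q * X^1) - C E * Q := by
    rw [hP]; ring
  have key : ∀ m, N ≤ m → P.coeff m = 0 := by
    intro m hm
    obtain ⟨t, rfl⟩ := Nat.exists_eq_add_of_le hm
    rw [hre]
    simp only [coeff_add, coeff_sub, coeff_C_mul, coeff_mul_X_pow', coeff_derivative]
    rcases t with _ | _ | t
    · -- m = N
      simp only [Nat.add_zero]
      rcases Nat.lt_or_ge N 2 with h2 | h2
      · obtain rfl : N = 1 := by omega
        norm_num at hcN hcpred ⊢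
        rw [hcN, hcpred, hctop 2 (by omega), hE, Fin.sum_univ_one]
        push_cast
        ring
      · obtain ⟨n, rfl⟩ : ∃ n, N = n + 2 := ⟨N - 2, by omega⟩
        have e1 : (2 : ℕ) ≤ n + 2 := by omega
        have e2 : (1 : ℕ) ≤ n + 2 := by omega
        simp only [if_pos e1, if_pos e2]
        rw [show n + 2 - 2 = n from by omega, show n + 2 - 1 = n + 1 from by omega] at *
        rw [show n + 1 + 1 = n + 2 from by omega] at *
        rw [hcN, hcpred, hctop (n + 2 + 1) (by omega), hE]
        push_cast
        ring
    · -- m = N + 1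
      rw [show N + (0 + 1) = N + 1 from by omega]
      have e1 : (2 : ℕ) ≤ N + 1 := by omega
      have e2 : (1 : ℕ) ≤ N + 1 := by omega
      simp only [if_pos e1, if_pos e2]
      rw [show N + 1 - 2 = N - 1 from by omega, show N + 1 - 1 = N from by omega]
      rw [show N - 1 + 1 = N from by omega]
      rw [hcN, hctop (N + 1) (by omega), hctop (N + 1 + 1) (by omega)]
      rw [Nat.cast_sub hN]
      push_cast
      ring
    · -- m ≥ N + 2
      rw [show N + (t + 1 + 1) = N + t + 2 from by omega]
      have e1 : (2 : ℕ) ≤ N + t + 2 := by omega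
      have e2 : (1 : ℕ) ≤ N + t + 2 := by omega
      simp only [if_pos e1, if_pos e2]
      rw [show N + t + 2 - 2 = N + t from by omega, show N + t + 2 - 1 = N + t + 1 from by omega]
      rw [hctop (N + t + 1) (by omega), hctop (N + t + 1 + 1) (by omega),
        hctop (N + t + 2 + 1) (by omega)]
      ring
  have hP0 : P = 0 := by
    by_cases h0 : P = 0
    · exact h0
    · refine eq_zero_of_natDegree_lt_card_of_eval_eq_zero P hdist heval ?_
      rw [Fintype.card_fin]
      exact (natDegree_lt_iff_degree_lt h0).mpr ((degree_lt_iff_coeff_zero P N).mpr key)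
  rw [hP] at hP0
  exact sub_eq_zero.mp hP0
end

section
/- Let γ = ℰ/k > 0 and v_1, ..., v_N be roots satisfying the two-site Bose–Hubbard Bethe equations, with Q(u) = ∏_j (u - v_j) satisfying HQ = EQ. Define ψ(x) = exp(-γ cosh x) ∏_{j=1}^N (e^{x/2} - v_j e^{-x/2}). Then ψ satisfies the Schrödinger equation -ψ'' + V ψ = (2E/k) ψ with V(x) = γ² sinh²(x) - (N+1)γ cosh(x). -/
open Polynomial in
private lemma pe_hasDerivAt (p : Polynomial ℂ) (z : ℂ) :
    HasDerivAt (fun z => p.eval (Complex.exp z))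
      (Complex.exp z * (derivative p).eval (Complex.exp z)) z := by
  simpa [mul_comm, Function.comp_def] using (p.hasDerivAt (Complex.exp z)).comp z (Complex.hasDerivAt_exp z)

private lemma pre_hasDerivAt (γ : ℝ) (N : ℕ) (z : ℂ) :
    HasDerivAt (fun z : ℂ => Complex.exp (-(γ:ℂ) * Complex.cosh z - (N:ℂ) * z / 2))
      ((-(γ:ℂ) * Complex.sinh z - (N:ℂ)/2)
        * Complex.exp (-(γ:ℂ) * Complex.cosh z - (N:ℂ) * z / 2)) z := by
  have h1 : HasDerivAt (fun z : ℂ => -(γ:ℂ) * Complex.cosh z - (N:ℂ) * z / 2)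
      (-(γ:ℂ) * Complex.sinh z - (N:ℂ)/2) z := by
    have hc := (Complex.hasDerivAt_cosh z).const_mul (-(γ:ℂ))
    have hl : HasDerivAt (fun z : ℂ => (N:ℂ) * z / 2) ((N:ℂ)/2) z := by
      simpa using ((hasDerivAt_id z).const_mul (N:ℂ)).div_const 2
    exact hc.sub hl
  simpa [mul_comm, Function.comp_def] using (Complex.hasDerivAt_exp _).comp z h1

open Polynomial in
theorem bose_hubbard_to_schrodinger (k ℰ γ : ℝ) (hk : 0 < k) (hℰ : 0 < ℰ)
    (hγ : γ = ℰ/k) (N : ℕ) (hN : 0 < N) (v : Fin N → ℂ)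
    (Q : Polynomial ℂ) (hQ : Q = ∏ j : Fin N, (X - C (v j)))
    (E : ℂ)
    (hHQ : C (-((k : ℂ)/2)) * X^2 * derivative (derivative Q)
         + C ((1:ℂ)/2) * (C ((k : ℂ)*((N : ℂ) - 1)) * X - C (ℰ : ℂ) * (1 - X^2)) * derivative Q
         + (C (-((k : ℂ)*(N : ℂ)^2/8)) - C ((ℰ : ℂ)*(N : ℂ)/2) * X) * Q = C E * Q)
    (ψ : ℝ → ℂ)
    (hψ : ∀ x : ℝ, ψ x = Complex.exp (-(γ : ℂ) * (Real.cosh x : ℂ))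
         * ∏ j : Fin N, (Complex.exp ((x : ℂ)/2) - v j * Complex.exp (-(x : ℂ)/2))) :
    ∀ x : ℝ, -(deriv (deriv ψ) x)
        + ((γ^2 * Real.sinh x ^ 2 - ((N : ℝ) + 1) * γ * Real.cosh x : ℝ) : ℂ) * ψ x
      = (2*E/(k : ℂ)) * ψ x := by
  have hk' : (k:ℂ) ≠ 0 := by exact_mod_cast hk.ne'
  have hE : (ℰ:ℂ) = (γ:ℂ) * k := by
    have : ℰ = γ * k := by rw [hγ]; field_simp
    exact_mod_cast this
  -- notation
  set pre : ℂ → ℂ := fun z => Complex.exp (-(γ:ℂ) * Complex.cosh z - (N:ℂ) * z / 2) with hpre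
  set a : ℂ → ℂ := fun z => -(γ:ℂ) * Complex.sinh z - (N:ℂ)/2 with ha
  have hQe : ∀ z : ℂ, Q.eval z = ∏ j : Fin N, (z - v j) := by
    intro z; simp [hQ, Polynomial.eval_prod]
  set P0 : ℂ → ℂ := fun z => Q.eval (Complex.exp z) with hP0
  set P1 : ℂ → ℂ := fun z => (derivative Q).eval (Complex.exp z) with hP1
  set P2 : ℂ → ℂ := fun z => (derivative (derivative Q)).eval (Complex.exp z) with hP2
  -- ψ in closed form
  have hψ' : ψ = fun t : ℝ => pre t * P0 t := by
    funext t
    rw [hψ t]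
    have key : ∀ j : Fin N, Complex.exp ((t:ℂ)/2) - v j * Complex.exp (-(t:ℂ)/2)
        = Complex.exp (-(t:ℂ)/2) * (Complex.exp (t:ℂ) - v j) := by
      intro j
      have h2 : Complex.exp (-(t:ℂ)/2) * Complex.exp (t:ℂ) = Complex.exp ((t:ℂ)/2) := by
        rw [← Complex.exp_add]; congr 1; ring
      rw [mul_sub, h2]; ring
    rw [Finset.prod_congr rfl (fun j _ => key j), Finset.prod_mul_distrib,
      Finset.prod_const]
    have h3 : Complex.exp (-(t:ℂ)/2) ^ N = Complex.exp (-((N:ℂ) * t / 2)) := by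
      rw [← Complex.exp_nat_mul]; congr 1; ring
    simp only [hpre, hP0, hQe, Finset.card_univ, Fintype.card_fin, h3,
      Complex.ofReal_cosh]
    rw [show (-(γ:ℂ) * Complex.cosh (t:ℂ) - (N:ℂ) * (t:ℂ) / 2)
        = (-(γ:ℂ) * Complex.cosh (t:ℂ)) + (-((N:ℂ) * (t:ℂ) / 2)) by ring,
      Complex.exp_add]
    push_cast
    ring
  -- first derivative
  have hG1 : ∀ z : ℂ, HasDerivAt (fun z => pre z * P0 z)
      (pre z * (a z * P0 z + Complex.exp z * P1 z)) z := by
    intro z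
    have := (pre_hasDerivAt γ N z).mul (pe_hasDerivAt Q z)
    refine this.congr_deriv ?_
    simp only [hpre, ha, hP0, hP1]
    ring
  have hd1 : ∀ t : ℝ, HasDerivAt ψ (pre t * (a t * P0 t + Complex.exp t * P1 t)) t := by
    intro t
    rw [hψ']
    exact (hG1 t).comp_ofReal
  have hderiv1 : deriv ψ = fun t : ℝ => pre t * (a t * P0 t + Complex.exp t * P1 t) :=
    funext fun t => (hd1 t).deriv
  -- second derivative
  have hG2 : ∀ z : ℂ, HasDerivAt (fun z : ℂ => pre z * (a z * P0 z + Complex.exp z * P1 z))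
      (pre z * (a z * (a z * P0 z + Complex.exp z * P1 z)
        + ((-(γ:ℂ) * Complex.cosh z) * P0 z + a z * (Complex.exp z * P1 z)
          + Complex.exp z * P1 z + Complex.exp z * (Complex.exp z * P2 z)))) z := by
    intro z
    have hA' : HasDerivAt a (-(γ:ℂ) * Complex.cosh z) z := by
      have hs := (Complex.hasDerivAt_sinh z).const_mul (-(γ:ℂ))
      simpa [ha] using hs.sub_const ((N:ℂ)/2)
    have hB : HasDerivAt (fun z : ℂ => a z * P0 z + Complex.exp z * P1 z)
        ((-(γ:ℂ) * Complex.cosh z) * P0 z + a z * (Complex.exp z * P1 z)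
          + (Complex.exp z * P1 z + Complex.exp z * (Complex.exp z * P2 z))) z := by
      have h1 := hA'.mul (pe_hasDerivAt Q z)
      have h2 := (Complex.hasDerivAt_exp z).mul (pe_hasDerivAt (derivative Q) z)
      exact h1.add h2
    have := (pre_hasDerivAt γ N z).mul hB
    refine this.congr_deriv ?_
    simp only [hpre, ha, hP0, hP1, hP2]
    ring
  intro x
  have hd2 : deriv (deriv ψ) x
      = pre x * (a x * (a x * P0 x + Complex.exp x * P1 x)
        + ((-(γ:ℂ) * Complex.cosh x) * P0 x + a x * (Complex.exp x * P1 x)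
          + Complex.exp x * P1 x + Complex.exp x * (Complex.exp x * P2 x))) := by
    rw [hderiv1]
    exact ((hG2 x).comp_ofReal).deriv
  rw [hd2, hψ']
  -- evaluate the Bethe ODE at u = exp x
  set u := Complex.exp (x:ℂ) with hu
  set w := Complex.exp (-(x:ℂ)) with hw
  have huw : u * w = 1 := by rw [hu, hw, ← Complex.exp_add]; simp
  have hsinh : Complex.sinh (x:ℂ) = (u - w)/2 := by
    have := Complex.two_sinh (x:ℂ); linear_combination this / 2
  have hcosh : Complex.cosh (x:ℂ) = (u + w)/2 := by
    have := Complex.two_cosh (x:ℂ); linear_combination this / 2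
  have h0 := congrArg (fun p => Polynomial.eval u p) hHQ
  simp only [Polynomial.eval_add, Polynomial.eval_mul, Polynomial.eval_sub,
    Polynomial.eval_pow, Polynomial.eval_C, Polynomial.eval_X, Polynomial.eval_one] at h0
  have hEval : -((k:ℂ)/2) * u^2 * P2 x + (1:ℂ)/2 * ((k:ℂ)*((N:ℂ)-1) * u - (ℰ:ℂ)*(1 - u^2)) * P1 x
      + (-((k:ℂ)*(N:ℂ)^2/8) - (ℰ:ℂ)*(N:ℂ)/2 * u) * P0 x = E * P0 x := by
    simpa [hP0, hP1, hP2, hu] using h0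
  have hEval2 : -(u^2 * P2 x) + (((N:ℂ)-1)*u + (γ:ℂ)*(u^2-1)) * P1 x
      + (-(N:ℂ)^2/4 - (γ:ℂ)*(N:ℂ)*u) * P0 x = 2*E/(k:ℂ) * P0 x := by
    rw [hE] at hEval
    field_simp
    linear_combination 8 * hEval
  show -(pre ↑x * (a ↑x * (a ↑x * P0 ↑x + u * P1 ↑x)
        + (-(γ:ℂ) * Complex.cosh ↑x * P0 ↑x + a ↑x * (u * P1 ↑x)
          + u * P1 ↑x + u * (u * P2 ↑x))))
      + ((γ^2 * Real.sinh x ^ 2 - ((N : ℝ) + 1) * γ * Real.cosh x : ℝ) : ℂ)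
        * (pre ↑x * P0 ↑x)
      = 2*E/(k:ℂ) * (pre ↑x * P0 ↑x)
  push_cast
  simp only [ha]
  rw [hsinh, hcosh]
  linear_combination (pre ↑x) * hEval2 - (γ:ℂ) * P1 ↑x * (pre ↑x) * huw
end

section
/- Let v_1, ..., v_M be distinct nonzero complex numbers satisfying the Bethe equations (2p+1)/(2v_j) - v_j - γ = Σ_{k≠j} 2/(v_k - v_j) for p ∈ {0,1}, and set N = 2M + p. Define ψ(x) = x^p exp(-γx²/8 - x⁴/64) ∏_{j=1}^M (x²/4 - v_j). Then ψ satisfies -ψ'' + Vψ = Eψ with V(x) = -γ/4 + ((γ² - 3 - 2N)/16)x² + (γ/32)x⁴ + (1/256)x⁶ and E = γ(M + p/2) + Σ_{j=1}^M v_j. -/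
open Finset Complex

noncomputable section BetheAux

def P0 (M : ℕ) (v : Fin M → ℂ) (z : ℂ) : ℂ := ∏ j, (z - v j)
def P1 (M : ℕ) (v : Fin M → ℂ) (z : ℂ) : ℂ := ∑ j, ∏ k ∈ univ.erase j, (z - v k)
def P2 (M : ℕ) (v : Fin M → ℂ) (z : ℂ) : ℂ :=
  ∑ j, ∑ k ∈ univ.erase j, ∏ l ∈ (univ.erase j).erase k, (z - v l)

lemma hasDerivAt_P0 (M : ℕ) (v : Fin M → ℂ) (z : ℂ) :
    HasDerivAt (P0 M v) (P1 M v z) z := by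
  have h : ∀ i ∈ (univ : Finset (Fin M)), HasDerivAt (fun w : ℂ => w - v i) 1 z :=
    fun i _ => (hasDerivAt_id z).sub_const (v i)
  have h' := HasDerivAt.fun_finsetProd h
  simp only [smul_eq_mul, mul_one] at h'
  exact h'

lemma hasDerivAt_P1 (M : ℕ) (v : Fin M → ℂ) (z : ℂ) :
    HasDerivAt (P1 M v) (P2 M v z) z := by
  unfold P1 P2
  apply HasDerivAt.fun_sum
  intro j _
  have h : ∀ k ∈ univ.erase j, HasDerivAt (fun w : ℂ => w - v k) 1 z :=
    fun k _ => (hasDerivAt_id z).sub_const (v k)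
  simpa [smul_eq_mul] using HasDerivAt.fun_finsetProd h

lemma sum_anti {M : ℕ} (f : Fin M → Fin M → ℂ)
    (hf : ∀ j k, j ≠ k → f j k + f k j = 0) :
    ∑ j, ∑ k ∈ univ.erase j, f j k = 0 := by
  have e1 : ∑ j, ∑ k ∈ univ.erase j, f j k
      = ∑ j, ∑ k, if k ≠ j then f j k else 0 := by
    refine Finset.sum_congr rfl fun j _ => ?_
    rw [← Finset.filter_ne', Finset.sum_filter]
  have e2 : ∑ j, ∑ k ∈ univ.erase j, f j k
      = ∑ j, ∑ k, if j ≠ k then f k j else 0 := by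
    rw [e1, Finset.sum_comm]
  have h2 : (∑ j, ∑ k ∈ univ.erase j, f j k) + (∑ j, ∑ k ∈ univ.erase j, f j k)
      = ∑ j : Fin M, ∑ k : Fin M,
          ((if k ≠ j then f j k else 0) + (if j ≠ k then f k j else 0)) := by
    simp only [Finset.sum_add_distrib]
    rw [← e1, ← e2]
  have h3 : (∑ j, ∑ k ∈ univ.erase j, f j k) + (∑ j, ∑ k ∈ univ.erase j, f j k) = 0 := by
    rw [h2]
    refine Finset.sum_eq_zero fun a _ => Finset.sum_eq_zero fun b _ => ?_
    by_cases h : b = a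
    · subst h; simp
    · simp only [h, Ne.symm h, ne_eq, not_false_eq_true, if_true]
      exact hf a b (Ne.symm h)
  exact add_self_eq_zero.mp h3

lemma key (γ : ℝ) (p M : ℕ) (v : Fin M → ℂ) (hdist : Function.Injective v)
    (hnz : ∀ j, v j ≠ 0)
    (hbethe : ∀ j : Fin M,
      (2*(p : ℂ) + 1)/(2 * v j) - v j - (γ : ℂ)
        = ∑ l ∈ Finset.univ.erase j, 2/(v l - v j)) (Z : ℂ) :
    -Z * P2 M v Z + ((γ:ℂ)*Z + Z^2 - (2*(p:ℂ)+1)/2) * P1 M v Z - (M:ℂ)*Z*P0 M v Z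
      = ((γ:ℂ)*(M:ℂ) + ∑ j, v j) * P0 M v Z := by
  have hA : ∀ j : Fin M, (Z - v j) * ∏ k ∈ univ.erase j, (Z - v k) = P0 M v Z := by
    intro j
    simp only [P0]
    exact Finset.mul_prod_erase univ (fun k => Z - v k) (mem_univ j)
  have hzP1 : Z * P1 M v Z
      = (M:ℂ) * P0 M v Z + ∑ j, v j * ∏ k ∈ univ.erase j, (Z - v k) := by
    have h : ∀ j ∈ (univ : Finset (Fin M)),
        Z * ∏ k ∈ univ.erase j, (Z - v k)
          = P0 M v Z + v j * ∏ k ∈ univ.erase j, (Z - v k) :=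
      fun j _ => by linear_combination hA j
    simp only [P1, Finset.mul_sum]
    rw [Finset.sum_congr rfl h, Finset.sum_add_distrib, Finset.sum_const, card_univ,
      Fintype.card_fin, nsmul_eq_mul]
  have hz2P1 : Z^2 * P1 M v Z
      = (M:ℂ)*Z*P0 M v Z + (∑ j, v j) * P0 M v Z
        + ∑ j, (v j)^2 * ∏ k ∈ univ.erase j, (Z - v k) := by
    have h : ∀ j ∈ (univ : Finset (Fin M)),
        Z^2 * ∏ k ∈ univ.erase j, (Z - v k)
          = Z * P0 M v Z + v j * P0 M v Z + (v j)^2 * ∏ k ∈ univ.erase j, (Z - v k) :=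
      fun j _ => by linear_combination (Z + v j) * hA j
    simp only [P1, Finset.mul_sum]
    rw [Finset.sum_congr rfl h, Finset.sum_add_distrib, Finset.sum_add_distrib,
      Finset.sum_const, card_univ, Fintype.card_fin, nsmul_eq_mul, ← Finset.sum_mul]
    ring
  have hkey2 : ∀ j : Fin M, ((γ:ℂ) * v j + (v j)^2 - (2*(p:ℂ)+1)/2)
      = ∑ k ∈ univ.erase j, 2 * v j / (v j - v k) := by
    intro j
    have hv := hnz j
    have h0 : ((γ:ℂ) * v j + (v j)^2 - (2*(p:ℂ)+1)/2)
        = (-(v j)) * ((2*(p:ℂ)+1)/(2 * v j) - v j - (γ:ℂ)) := by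
      field_simp
      ring
    rw [h0, hbethe j, Finset.mul_sum]
    refine Finset.sum_congr rfl fun k hk => ?_
    have hkj : k ≠ j := Finset.ne_of_mem_erase hk
    have hne : v k - v j ≠ 0 := sub_ne_zero.2 fun h => hkj (hdist h)
    have hne' : v j - v k ≠ 0 := sub_ne_zero.2 fun h => hkj (hdist h).symm
    field_simp
    ring
  have hterm : ∀ j ∈ (univ : Finset (Fin M)),
      ((γ:ℂ) * v j + (v j)^2 - (2*(p:ℂ)+1)/2) * ∏ k ∈ univ.erase j, (Z - v k)
        = ∑ k ∈ univ.erase j,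
            (2 * v j * (Z - v k) / (v j - v k)) * ∏ l ∈ (univ.erase j).erase k, (Z - v l) := by
    intro j _
    rw [hkey2 j, Finset.sum_mul]
    refine Finset.sum_congr rfl fun k hk => ?_
    have hkj : k ≠ j := Finset.ne_of_mem_erase hk
    have hne' : v j - v k ≠ 0 := sub_ne_zero.2 fun h => hkj (hdist h).symm
    rw [← Finset.mul_prod_erase _ _ hk]
    field_simp
  have hanti : ∑ j, ∑ k ∈ univ.erase j,
      ((2 * v j * (Z - v k) / (v j - v k)) * ∏ l ∈ (univ.erase j).erase k, (Z - v l)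
        - Z * ∏ l ∈ (univ.erase j).erase k, (Z - v l)) = 0 := by
    apply sum_anti
    intro j k hjk
    have hd : v j - v k ≠ 0 := sub_ne_zero.2 fun h => hjk (hdist h)
    have hd' : v k - v j ≠ 0 := sub_ne_zero.2 fun h => hjk.symm (hdist h)
    have hBs : ∏ l ∈ (univ.erase j).erase k, (Z - v l)
        = ∏ l ∈ (univ.erase k).erase j, (Z - v l) := by
      rw [Finset.erase_right_comm]
    rw [hBs]
    field_simp
    ring
  have hfinal : ∑ j, (((γ:ℂ) * v j + (v j)^2 - (2*(p:ℂ)+1)/2)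
        * ∏ k ∈ univ.erase j, (Z - v k)) = Z * P2 M v Z := by
    rw [Finset.sum_congr rfl hterm]
    have h' : (∑ j, ∑ k ∈ univ.erase j,
          (2 * v j * (Z - v k) / (v j - v k)) * ∏ l ∈ (univ.erase j).erase k, (Z - v l))
        - (∑ j, ∑ k ∈ univ.erase j, Z * ∏ l ∈ (univ.erase j).erase k, (Z - v l)) = 0 := by
      rw [← Finset.sum_sub_distrib]
      simpa [Finset.sum_sub_distrib] using hanti
    have hZP2 : Z * P2 M v Z
        = ∑ j, ∑ k ∈ univ.erase j, Z * ∏ l ∈ (univ.erase j).erase k, (Z - v l) := by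
      simp only [P2, Finset.mul_sum]
    rw [hZP2]
    linear_combination h'
  have hsplit : ∑ j, (((γ:ℂ) * v j + (v j)^2 - (2*(p:ℂ)+1)/2)
        * ∏ k ∈ univ.erase j, (Z - v k))
      = (γ:ℂ) * (∑ j, v j * ∏ k ∈ univ.erase j, (Z - v k))
        + (∑ j, (v j)^2 * ∏ k ∈ univ.erase j, (Z - v k))
        - ((2*(p:ℂ)+1)/2) * P1 M v Z := by
    simp only [P1, Finset.mul_sum, ← Finset.sum_sub_distrib, ← Finset.sum_add_distrib]
    exact Finset.sum_congr rfl fun j _ => by ring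
  linear_combination hfinal - hsplit + (γ:ℂ) * hzP1 + hz2P1

def Ψ (γ : ℝ) (p M : ℕ) (v : Fin M → ℂ) (x : ℝ) : ℂ :=
  (x:ℂ)^p * Complex.exp (-(γ:ℂ) * (x:ℂ)^2/8 - (x:ℂ)^4/64) * P0 M v ((x:ℂ)^2/4)

def Ψ1 (γ : ℝ) (p M : ℕ) (v : Fin M → ℂ) (x : ℝ) : ℂ :=
  Complex.exp (-(γ:ℂ) * (x:ℂ)^2/8 - (x:ℂ)^4/64) *
    ( (p:ℂ) * P0 M v ((x:ℂ)^2/4)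
      + (x:ℂ)^p * ((-(γ:ℂ)*(x:ℂ)/4 - (x:ℂ)^3/16) * P0 M v ((x:ℂ)^2/4))
      + (x:ℂ)^p * ((x:ℂ)/2 * P1 M v ((x:ℂ)^2/4)) )

def Ψ2 (γ : ℝ) (p M : ℕ) (v : Fin M → ℂ) (x : ℝ) : ℂ :=
  Complex.exp (-(γ:ℂ) * (x:ℂ)^2/8 - (x:ℂ)^4/64) *
    ( (-(γ:ℂ)*(x:ℂ)/4 - (x:ℂ)^3/16) *
        ( (p:ℂ) * P0 M v ((x:ℂ)^2/4)
          + (x:ℂ)^p * ((-(γ:ℂ)*(x:ℂ)/4 - (x:ℂ)^3/16) * P0 M v ((x:ℂ)^2/4))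
          + (x:ℂ)^p * ((x:ℂ)/2 * P1 M v ((x:ℂ)^2/4)) )
      + ( (p:ℂ) * ((x:ℂ)/2 * P1 M v ((x:ℂ)^2/4))
          + ( (p:ℂ) * ((-(γ:ℂ)*(x:ℂ)/4 - (x:ℂ)^3/16) * P0 M v ((x:ℂ)^2/4))
              + (x:ℂ)^p * ((-(γ:ℂ)/4 - 3*(x:ℂ)^2/16) * P0 M v ((x:ℂ)^2/4)
                  + (-(γ:ℂ)*(x:ℂ)/4 - (x:ℂ)^3/16) * ((x:ℂ)/2 * P1 M v ((x:ℂ)^2/4))) )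
          + ( (p:ℂ) * ((x:ℂ)/2 * P1 M v ((x:ℂ)^2/4))
              + (x:ℂ)^p * ((1/2 : ℂ) * P1 M v ((x:ℂ)^2/4)
                  + (x:ℂ)/2 * ((x:ℂ)/2 * P2 M v ((x:ℂ)^2/4))) ) ) )

variable (γ : ℝ) (p M : ℕ) (v : Fin M → ℂ) (x : ℝ)


lemma hX : HasDerivAt (fun t : ℝ => (t:ℂ)) 1 x := by
  exact Complex.ofRealCLM.hasDerivAt (x := x)

lemma hXpow (n : ℕ) : HasDerivAt (fun t : ℝ => (t:ℂ)^n) ((n:ℂ) * (x:ℂ)^(n-1)) x := by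
  have h := (hasDerivAt_pow n ((x:ℂ))).scomp x (hX x)
  simpa [Function.comp_def, smul_eq_mul] using h

lemma hz : HasDerivAt (fun t : ℝ => ((t:ℂ)^2/4)) ((x:ℂ)/2) x := by
  have h := (hXpow x 2).div_const 4
  refine h.congr_deriv ?_
  push_cast
  ring

lemma hu0 : HasDerivAt (fun t : ℝ => P0 M v ((t:ℂ)^2/4))
    ((x:ℂ)/2 * P1 M v ((x:ℂ)^2/4)) x := by
  have h := (hasDerivAt_P0 M v ((x:ℂ)^2/4)).scomp x (hz x)
  simpa [Function.comp_def, smul_eq_mul] using h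

lemma hu1 : HasDerivAt (fun t : ℝ => P1 M v ((t:ℂ)^2/4))
    ((x:ℂ)/2 * P2 M v ((x:ℂ)^2/4)) x := by
  have h := (hasDerivAt_P1 M v ((x:ℂ)^2/4)).scomp x (hz x)
  simpa [Function.comp_def, smul_eq_mul] using h

lemma hG : HasDerivAt (fun t : ℝ => -(γ:ℂ) * (t:ℂ)^2/8 - (t:ℂ)^4/64)
    (-(γ:ℂ)*(x:ℂ)/4 - (x:ℂ)^3/16) x := by
  have h1 := ((hXpow x 2).const_mul (-(γ:ℂ))).div_const 8
  have h2 := (hXpow x 4).div_const 64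
  refine (h1.sub h2).congr_deriv ?_
  push_cast
  ring

lemma hgd : HasDerivAt (fun t : ℝ => -(γ:ℂ) * (t:ℂ)/4 - (t:ℂ)^3/16)
    (-(γ:ℂ)/4 - 3*(x:ℂ)^2/16) x := by
  have h1 := ((hX x).const_mul (-(γ:ℂ))).div_const 4
  have h2 := (hXpow x 3).div_const 16
  refine (h1.sub h2).congr_deriv ?_
  push_cast
  ring

lemma hxp (hp1 : p - 1 = 0) : HasDerivAt (fun t : ℝ => (t:ℂ)^p) ((p:ℂ)) x := by
  have h := hXpow x p
  rw [hp1, pow_zero, mul_one] at h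
  exact h

lemma hasDerivAt_Psi (hp1 : p - 1 = 0) :
    HasDerivAt (Ψ γ p M v) (Ψ1 γ p M v x) x := by
  have h := ((hxp p x hp1).mul (hG γ x).cexp).mul (hu0 M v x)
  have h2 : HasDerivAt (Ψ γ p M v) _ x := h
  convert h2 using 1
  simp only [Ψ1, Pi.mul_apply]
  ring

lemma hasDerivAt_Psi1 (hp1 : p - 1 = 0) :
    HasDerivAt (Ψ1 γ p M v) (Ψ2 γ p M v x) x := by
  have hexp := (hG γ x).cexp
  have t1 := (hu0 M v x).const_mul (p:ℂ)
  have t2 := (hxp p x hp1).mul ((hgd γ x).mul (hu0 M v x))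
  have t3 := (hxp p x hp1).mul (((hX x).div_const 2).mul (hu1 M v x))
  have hSb := (t1.add t2).add t3
  have h := hexp.mul hSb
  have h2 : HasDerivAt (Ψ1 γ p M v) _ x := h
  convert h2 using 1
  simp only [Ψ2, Pi.mul_apply, Pi.add_apply]
  push_cast
  ring


end BetheAux

theorem atomic_molecular_to_schrodinger (γ : ℝ) (p M : ℕ) (hp : p = 0 ∨ p = 1)
    (hM : 0 < M) (N : ℕ) (hN : N = 2*M + p)
    (v : Fin M → ℂ) (hdist : Function.Injective v) (hnz : ∀ j, v j ≠ 0)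
    (hbethe : ∀ j : Fin M,
      (2*(p : ℂ) + 1)/(2 * v j) - v j - (γ : ℂ)
        = ∑ l ∈ Finset.univ.erase j, 2/(v l - v j))
    (E : ℂ) (hE : E = (γ : ℂ) * ((M : ℂ) + (p : ℂ)/2) + ∑ j : Fin M, v j)
    (ψ : ℝ → ℂ)
    (hψ : ∀ x : ℝ, ψ x = (x : ℂ)^p
        * Complex.exp (-(γ : ℂ) * (x : ℂ)^2/8 - (x : ℂ)^4/64)
        * ∏ j : Fin M, ((x : ℂ)^2/4 - v j)) :
    ∀ x : ℝ, -(deriv (deriv ψ) x)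
        + ((-γ/4 + ((γ^2 - 3 - 2*(N : ℝ))/16)*x^2 + (γ/32)*x^4 + (1/256)*x^6 : ℝ) : ℂ) * ψ x
      = E * ψ x := by
  have hp1 : p - 1 = 0 := by rcases hp with h | h <;> simp [h]
  have hψfun : ψ = Ψ γ p M v := funext fun t => by rw [hψ t]; rfl
  intro x
  have hd1 : deriv ψ = Ψ1 γ p M v := by
    funext t
    rw [hψfun]
    exact (hasDerivAt_Psi γ p M v t hp1).deriv
  have hd2 : deriv (deriv ψ) x = Ψ2 γ p M v x := by
    rw [hd1]
    exact (hasDerivAt_Psi1 γ p M v x hp1).deriv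
  rw [hd2, hψfun]
  have hk := key γ p M v hdist hnz hbethe ((x:ℂ)^2/4)
  subst hN hE
  simp only [Ψ, Ψ2]
  push_cast
  rcases hp with h | h <;> subst h
  · simp only [pow_zero, Nat.cast_zero]
    linear_combination Complex.exp (-(γ:ℂ) * (x:ℂ)^2/8 - (x:ℂ)^4/64) * hk
  · simp only [pow_one, Nat.cast_one]
    linear_combination (x:ℂ) * Complex.exp (-(γ:ℂ) * (x:ℂ)^2/8 - (x:ℂ)^4/64) * hk
end

section
/- Define for γ ≤ γc = √(2N+3) the value θ(γ) = -∂Ẽ0/∂γ of the classical coherence correlator for the sextic potential, where Ẽ0(γ) = V(x0(γ)) with x0 the nonzero minimizer. Then θ(γ) - θ(γc) is asymptotically linear in γ - γc as γ → γc⁻, i.e. (θ(γ) - θ(γc))/(γ - γc) converges to a finite nonzero limit, while for γ > γc one has θ(γ) constant equal to 1/4 (coming from the -γ/4 term since the minimizer is x0 = 0). -/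
theorem sextic_coherence_correlator_behaviour (N : ℝ) (hN : 1 ≤ N)
    (V : ℝ → ℝ → ℝ)
    (hV : ∀ γ x, V γ x = -γ/4 + ((γ^2 - 3 - 2*N)/16)*x^2 + (γ/32)*x^4 + (1/256)*x^6)
    (E : ℝ → ℝ) (hE : ∀ γ, IsGLB (Set.range (V γ)) (E γ))
    (θ : ℝ → ℝ) (hθ : ∀ γ, θ γ = -(deriv E γ))
    (γc : ℝ) (hγc : γc = Real.sqrt (2*N + 3)) :
    (∀ γ : ℝ, γc < γ → θ γ = 1/4) ∧
    (∃ c : ℝ, c ≠ 0 ∧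
      Filter.Tendsto (fun γ => (θ γ - θ γc)/(γ - γc))
        (nhdsWithin γc (Set.Iio γc)) (nhds c)) := by
  have hγc2 : γc^2 = 2*N + 3 := by
    rw [hγc]; exact Real.sq_sqrt (by linarith)
  have hγcpos : (0:ℝ) < γc := by
    rw [hγc]; exact Real.sqrt_pos.mpr (by linarith)
  -- rewrite V in terms of γc
  have hV' : ∀ γ x, V γ x = -γ/4 + ((γ^2 - γc^2)/16)*x^2 + (γ/32)*x^4 + (1/256)*x^6 := by
    intro γ x; rw [hV]; rw [show γ^2 - 3 - 2*N = γ^2 - γc^2 by linarith]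
  set s : ℝ → ℝ := fun γ => Real.sqrt (γ^2 + 3*γc^2) with hs_def
  set t : ℝ → ℝ := fun γ => (4/3)*(s γ - 2*γ) with ht_def
  set F : ℝ → ℝ := fun γ =>
    -γ/4 + ((γ^2 - γc^2)/16)*(t γ) + (γ/32)*(t γ)^2 + (1/256)*(t γ)^3 with hF_def
  clear_value s t F
  have hsposarg : ∀ γ : ℝ, (0:ℝ) < γ^2 + 3*γc^2 := by
    intro γ; nlinarith [sq_nonneg γ, sq_nonneg γc]
  have hspos : ∀ γ, 0 < s γ := by
    intro γ; simp only [hs_def]; exact Real.sqrt_pos.mpr (hsposarg γ)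
  have hssq : ∀ γ, (s γ)^2 = γ^2 + 3*γc^2 := by
    intro γ; simp only [hs_def]; exact Real.sq_sqrt (le_of_lt (hsposarg γ))
  have ht_nonneg : ∀ γ, γ ≤ γc → 0 ≤ t γ := by
    intro γ hγ
    have h1 := hspos γ
    have h2 := hssq γ
    simp only [ht_def]
    nlinarith [h1, h2]
  have hsc : s γc = 2*γc := by
    have h1 := hspos γc
    have h2 := hssq γc
    nlinarith [h1, h2]
  have htc : t γc = 0 := by
    simp only [ht_def, hsc]; ring
  have hcrit : ∀ γ, (γ^2 - γc^2)/16 + (γ/16)*(t γ) + (3/256)*(t γ)^2 = 0 := by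
    intro γ
    have h := hssq γ
    simp only [ht_def]
    linear_combination (1/48) * h
  -- explicit formula for E on (0, γc]
  have hEF : ∀ γ, 0 < γ → γ ≤ γc → E γ = F γ := by
    intro γ hg0 hgc
    have ht0 := ht_nonneg γ hgc
    have hglb : IsGLB (Set.range (V γ)) (F γ) := by
      constructor
      · rintro _ ⟨x, rfl⟩
        have hkey : V γ x - F γ = (x^2 - t γ)^2 * (x^2/256 + γ/32 + t γ/128) := by
          rw [hV']
          simp only [hF_def]
          linear_combination (x^2 - t γ) * hcrit γ
        have hnn : 0 ≤ (x^2 - t γ)^2 * (x^2/256 + γ/32 + t γ/128) :=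
          mul_nonneg (sq_nonneg _) (by nlinarith [sq_nonneg x])
        linarith [hkey, hnn]
      · intro b hb
        have hx : V γ (Real.sqrt (t γ)) = F γ := by
          have h2 : (Real.sqrt (t γ))^2 = t γ := Real.sq_sqrt ht0
          rw [hV']
          simp only [hF_def]
          linear_combination ((γ^2 - γc^2)/16 + (γ/32)*((Real.sqrt (t γ))^2 + t γ)
            + (1/256)*((Real.sqrt (t γ))^4 + (Real.sqrt (t γ))^2 * t γ + (t γ)^2)) * h2
        exact hb ⟨Real.sqrt (t γ), hx⟩
    exact (hE γ).unique hglb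
  -- explicit formula for E on [γc, ∞)
  have hEright : ∀ γ, γc ≤ γ → E γ = -γ/4 := by
    intro γ hγ
    have hglb : IsGLB (Set.range (V γ)) (-γ/4) := by
      constructor
      · rintro _ ⟨x, rfl⟩
        rw [hV']
        have h2 : 0 ≤ (γ^2 - γc^2)/16 * x^2 :=
          mul_nonneg (by nlinarith [hγcpos]) (sq_nonneg x)
        have h4 : 0 ≤ γ/32 * x^4 := by
          have : 0 < γ := lt_of_lt_of_le hγcpos hγ
          positivity
        have h6 : 0 ≤ (1/256:ℝ) * x^6 := by positivity
        linarith
      · intro b hb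
        have hx : V γ 0 = -γ/4 := by rw [hV']; ring
        exact hb ⟨0, hx⟩
    exact (hE γ).unique hglb
  -- derivative of F
  have hF' : ∀ γ, HasDerivAt F (-1/4 + γ*(t γ)/8 + (t γ)^2/32) γ := by
    intro γ
    rw [hF_def]
    have h1 : HasDerivAt (fun x : ℝ => x^2 + 3*γc^2) (2*γ) γ := by
      simpa using ((hasDerivAt_pow 2 γ).add_const (3*γc^2))
    have h2 : HasDerivAt s ((2*γ)/(2 * s γ)) γ := by
      simpa [hs_def] using h1.sqrt (ne_of_gt (hsposarg γ))
    have h3 : HasDerivAt t ((4/3)*(γ / s γ - 2)) γ := by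
      have h := (h2.sub ((hasDerivAt_id γ).const_mul 2)).const_mul (4/3:ℝ)
      have h' : HasDerivAt t ((4/3)*((2*γ)/(2 * s γ) - 2)) γ := by
        simpa [ht_def, mul_comm] using h
      refine h'.congr_deriv ?_
      rw [mul_div_mul_left _ _ (two_ne_zero)]
    have p0 : HasDerivAt (fun γ : ℝ => -γ/4) (-(1:ℝ)/4) γ := by
      simpa using (hasDerivAt_id γ).neg.div_const 4
    have p1 : HasDerivAt (fun γ : ℝ => (γ^2 - γc^2)/16) (γ/8) γ := by
      have h := ((hasDerivAt_pow 2 γ).sub_const (γc^2)).div_const 16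
      refine h.congr_deriv ?_
      push_cast; ring
    have p2 : HasDerivAt (fun γ : ℝ => γ/32) (1/32 : ℝ) γ := by
      simpa using (hasDerivAt_id γ).div_const 32
    have q1 := p1.mul h3
    have q2 := p2.mul (h3.pow 2)
    have q3 := (h3.pow 3).const_mul (1/256 : ℝ)
    have hsum := ((p0.add q1).add q2).add q3
    have hne : s γ ≠ 0 := ne_of_gt (hspos γ)
    refine hsum.congr_deriv ?_
    push_cast
    simp only [Pi.pow_apply]
    linear_combination ((4/3)*(γ / s γ - 2)) * hcrit γ
  -- E is differentiable at γc with derivative -1/4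
  have hFc0 : HasDerivAt F (-1/4) γc := by
    have := hF' γc
    rw [htc] at this
    simpa using this.congr_deriv (by ring)
  have hl : HasDerivWithinAt E (-1/4) (Set.Iic γc) γc := by
    have hev : E =ᶠ[nhdsWithin γc (Set.Iic γc)] F := by
      filter_upwards [self_mem_nhdsWithin,
        mem_nhdsWithin_of_mem_nhds (isOpen_Ioi.mem_nhds hγcpos)] with x hx1 hx2
      exact hEF x hx2 hx1
    exact (hFc0.hasDerivWithinAt).congr_of_eventuallyEq hev (hEF γc hγcpos le_rfl)
  have hr : HasDerivWithinAt E (-1/4) (Set.Ici γc) γc := by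
    have hg : HasDerivAt (fun x : ℝ => -x/4) (-1/4) γc := by
      simpa using (hasDerivAt_id γc).neg.div_const 4
    exact hg.hasDerivWithinAt.congr (fun x hx => hEright x hx) (hEright γc le_rfl)
  have hEd : HasDerivAt E (-1/4) γc := by
    have := hl.union hr
    rw [Set.Iic_union_Ici] at this
    exact hasDerivWithinAt_univ.mp this
  have hθc : θ γc = 1/4 := by rw [hθ, hEd.deriv]; norm_num
  constructor
  · -- γ > γc : θ γ = 1/4
    intro γ hγ
    have hev : E =ᶠ[nhds γ] (fun x => -x/4) := by
      filter_upwards [isOpen_Ioi.mem_nhds hγ] with x hx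
      exact hEright x (le_of_lt hx)
    have hg : HasDerivAt (fun x : ℝ => -x/4) (-1/4) γ := by
      simpa using (hasDerivAt_id γ).neg.div_const 4
    have : deriv E γ = -1/4 := by
      rw [Filter.EventuallyEq.deriv_eq hev]
      exact hg.deriv
    rw [hθ, this]; norm_num
  · -- the limit from the left
    refine ⟨γc/4, ne_of_gt (by positivity), ?_⟩
    set G : ℝ → ℝ := fun γ => (γ/8 + t γ/32) * (4*(γ+γc)/(s γ + 2*γ)) with hG_def
    clear_value G
    have hscont : Continuous s := by
      simp only [hs_def]
      exact Real.continuous_sqrt.comp ((continuous_pow 2).add continuous_const)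
    have htcont : Continuous t := by
      simp only [ht_def]
      exact continuous_const.mul (hscont.sub (continuous_const.mul continuous_id))
    have hden : s γc + 2*γc ≠ 0 :=
      ne_of_gt (by have := hspos γc; linarith)
    have hGcont : ContinuousAt G γc := by
      simp only [hG_def]
      exact ((continuousAt_id.div_const 8).add (htcont.continuousAt.div_const 32)).mul
        ((((continuousAt_id.add continuousAt_const).const_mul 4)).div
          (hscont.continuousAt.add ((continuousAt_id.const_mul 2)))
          (by simpa [mul_comm] using hden))
    have hGval : G γc = γc/4 := by
      have h0 : γc ≠ 0 := ne_of_gt hγcpos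
      simp only [hG_def, htc, hsc]
      field_simp
      ring
    have htend : Filter.Tendsto G (nhdsWithin γc (Set.Iio γc)) (nhds (γc/4)) := by
      rw [← hGval]
      exact (hGcont.continuousWithinAt).tendsto
    refine htend.congr' ?_
    filter_upwards [self_mem_nhdsWithin,
      mem_nhdsWithin_of_mem_nhds (isOpen_Ioi.mem_nhds hγcpos)] with γ h1 h2
    have h1' : γ < γc := h1
    have h2' : (0:ℝ) < γ := h2
    have hEloc : E =ᶠ[nhds γ] F := by
      filter_upwards [isOpen_Ioo.mem_nhds (show γ ∈ Set.Ioo 0 γc from ⟨h2', h1'⟩)] with x hx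
      exact hEF x hx.1 (le_of_lt hx.2)
    have hder : deriv E γ = -1/4 + γ*(t γ)/8 + (t γ)^2/32 := by
      rw [Filter.EventuallyEq.deriv_eq hEloc]
      exact (hF' γ).deriv
    rw [hθ γ, hθc, hder]
    have key : t γ * (s γ + 2*γ) = 4*(γc^2 - γ^2) := by
      have h := hssq γ
      simp only [ht_def]
      linear_combination (4/3) * h
    have hne1 : γ - γc ≠ 0 := sub_ne_zero.mpr (ne_of_lt h1')
    have hne2 : s γ + 2*γ ≠ 0 :=
      ne_of_gt (by have := hspos γ; linarith)
    have hfrac : 4*(γ+γc)/(s γ + 2*γ) = -(t γ)/(γ - γc) := by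
      rw [div_eq_div_iff hne2 hne1]
      linear_combination key
    have hA : (-(-1/4 + γ*(t γ)/8 + (t γ)^2/32) - 1/4)
        = (γ/8 + t γ/32) * (-(t γ)) := by ring
    simp only [hG_def]
    rw [hA, hfrac, mul_div_assoc]
end
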